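/- arXiv:1810.04830 — 2 statements merged into one kernel-verified Lean document; each statement's English description precedes it below -/
import Mathlib

section
/- Let u, v be positive integers with uv > 1, let z be a positive rational, and let A(n) denote the mean of the 2^n depth-n vertices of the (u,v)-Calkin–Wilf tree rooted at z. Then A(n) = z/2^n + v(1 − 1/2^n) + (1/2^n)·∑_{k=1}^{n} ∑_{y ∈ row(n−k)} 1/(u + 1/y), where row(j) is the depth-j row. -/
/-- Value of the `(u,v)`-Calkin–Wilf tree vertex reached from root `z` via the
reversed path `l` (`true` = right child `x+v`, `false` = left child `1/(u+1/x)`). -/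
def uvNode (u v : ℕ) (z : ℚ) : List Bool → ℚ
  | [] => z
  | b :: l => let x := uvNode u v z l; if b then x + v else 1 / (u + 1 / x)

/-- Sum of the depth-`n` row. -/
noncomputable def S (u v : ℕ) (z : ℚ) (n : ℕ) : ℚ :=
  ∑ f : Fin n → Bool, uvNode u v z (List.ofFn f)

/-- Mean of the depth-`n` row. -/
noncomputable def A (u v : ℕ) (z : ℚ) (n : ℕ) : ℚ := S u v z n / 2 ^ n

/-- The sum of left-children values of the depth-`n` row. -/
noncomputable def T (u v : ℕ) (z : ℚ) (n : ℕ) : ℚ :=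
  ∑ f : Fin n → Bool, 1 / (u + 1 / uvNode u v z (List.ofFn f))

lemma S_succ (u v : ℕ) (z : ℚ) (n : ℕ) :
    S u v z (n + 1) = S u v z n + 2 ^ n * v + T u v z n := by
  rw [S, ← ((Fin.consEquiv (fun _ : Fin (n + 1) => Bool)).sum_comp
    (fun f => uvNode u v z (List.ofFn f)))]
  simp only [Fin.consEquiv, Equiv.coe_fn_mk]
  rw [Fintype.sum_prod_type, Fintype.sum_bool]
  simp only [List.ofFn_succ, Fin.cons_zero, Fin.cons_succ, uvNode]
  simp only [if_true, if_false, Finset.sum_add_distrib, Finset.sum_const,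
    Finset.card_univ]
  rw [S, T]
  have hc : Fintype.card (Fin n → Bool) = 2 ^ n := by simp
  rw [hc]
  push_cast
  ring

lemma A_range (u v : ℕ) (z : ℚ) (n : ℕ) :
    A u v z n = z / 2 ^ n + v * (1 - 1 / 2 ^ n) +
      (1 / 2 ^ n) * ∑ j ∈ Finset.range n, T u v z j := by
  induction n with
  | zero =>
      simp [A, S, uvNode]
  | succ n ih =>
      have h2 : (2 : ℚ) ^ n ≠ 0 := by positivity
      have hS : S u v z n = 2 ^ n * (z / 2 ^ n + v * (1 - 1 / 2 ^ n) +
          (1 / 2 ^ n) * ∑ j ∈ Finset.range n, T u v z j) := by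
        rw [← ih, A]; field_simp
      rw [A, S_succ, hS, Finset.sum_range_succ]
      field_simp
      ring

theorem uv_mean_formula (u v : ℕ) (hu : 0 < u) (hv : 0 < v) (huv : 1 < u * v)
    (z : ℚ) (hz : 0 < z) (n : ℕ) :
    A u v z n = z / 2 ^ n + v * (1 - 1 / 2 ^ n) +
      (1 / 2 ^ n) * ∑ k ∈ Finset.Icc 1 n,
        ∑ f : Fin (n - k) → Bool, 1 / (u + 1 / uvNode u v z (List.ofFn f)) := by
  have key : ∑ k ∈ Finset.Icc 1 n, T u v z (n - k)
      = ∑ j ∈ Finset.range n, T u v z j := by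
    rw [show Finset.Icc 1 n = Finset.Ico 1 (n + 1) from (Finset.Ico_add_one_right_eq_Icc 1 n).symm,
      Finset.sum_Ico_eq_sum_range]
    simp only [Nat.add_sub_cancel]
    rw [← Finset.sum_range_reflect]
    apply Finset.sum_congr rfl
    intro i hi
    simp only [Finset.mem_range] at hi
    congr 1
    omega
  calc A u v z n = z / 2 ^ n + v * (1 - 1 / 2 ^ n) +
      (1 / 2 ^ n) * ∑ j ∈ Finset.range n, T u v z j := A_range u v z n
    _ = _ := by rw [← key]; rfl
end

section
/- Let u, v be positive integers with uv > 1 and z a positive rational. Then the mean A(n) of the depth-n row of the (u,v)-Calkin–Wilf tree rooted at z is bounded above uniformly in n; in fact A(n) ≤ z + v + 1/u for all n ≥ 0. -/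
lemma uvNode_pos (u v : ℕ) (hu : 0 < u) (z : ℚ) (hz : 0 < z) :
    ∀ l, 0 < uvNode u v z l
  | [] => hz
  | b :: l => by
    have hx := uvNode_pos u v hu z hz l
    show 0 < if b then uvNode u v z l + v else 1 / (↑u + 1 / uvNode u v z l)
    have hu' : (0:ℚ) < u := by exact_mod_cast hu
    cases b <;> simp only [if_true, if_false, Bool.false_eq_true, ite_true, ite_false] <;> positivity

lemma S_succ_s17 (u v : ℕ) (z : ℚ) (n : ℕ) :
    S u v z (n+1) = ∑ g : Fin n → Bool,
      ((uvNode u v z (List.ofFn g) + v) + 1 / (u + 1 / uvNode u v z (List.ofFn g))) := by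
  rw [S, ← (Fin.consEquiv (fun _ : Fin (n+1) => Bool)).sum_comp]
  rw [Fintype.sum_prod_type]
  rw [Fintype.sum_bool]
  rw [← Finset.sum_add_distrib]
  apply Finset.sum_congr rfl
  intro g _
  simp [List.ofFn_succ, Fin.consEquiv, uvNode]

theorem uv_mean_bounded (u v : ℕ) (hu : 0 < u) (hv : 0 < v) (huv : 1 < u * v)
    (z : ℚ) (hz : 0 < z) (n : ℕ) :
    A u v z n ≤ z + v + 1 / u := by
  have hu' : (0:ℚ) < u := by exact_mod_cast hu
  induction n with
  | zero =>
    simp [A, S, uvNode]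
    have h1 : (0:ℚ) < (u:ℚ)⁻¹ := by positivity
    have h2 : (0:ℚ) ≤ (v:ℚ) := by positivity
    linarith
  | succ n ih =>
    have hS : S u v z (n+1) ≤ S u v z n + 2 ^ n * (v + 1 / u) := by
      rw [S_succ_s17]
      calc ∑ g : Fin n → Bool,
            ((uvNode u v z (List.ofFn g) + v) + 1 / (u + 1 / uvNode u v z (List.ofFn g)))
          ≤ ∑ g : Fin n → Bool, (uvNode u v z (List.ofFn g) + ((v:ℚ) + 1/u)) := by
            apply Finset.sum_le_sum
            intro g _
            have hx := uvNode_pos u v hu z hz (List.ofFn g)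
            have h1 : 1 / (↑u + 1 / uvNode u v z (List.ofFn g)) ≤ 1 / u := by
              apply one_div_le_one_div_of_le hu'
              have : 0 < 1 / uvNode u v z (List.ofFn g) := by positivity
              linarith
            linarith
        _ = S u v z n + 2 ^ n * (v + 1/u) := by
            rw [Finset.sum_add_distrib, S, Finset.sum_const]
            simp [Finset.card_univ, mul_comm]
            ring
    have h2 : (0:ℚ) < 2 ^ n := by positivity
    have hA : A u v z n ≤ z + v + 1/u := ih
    rw [A] at hA ⊢
    rw [div_le_iff₀ (by positivity)] at hA ⊢
    have : S u v z n ≤ (z + v + 1/u) * 2 ^ n := hA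
    calc S u v z (n+1) ≤ S u v z n + 2 ^ n * (v + 1/u) := hS
      _ ≤ (z + v + 1/u) * 2 ^ n + 2 ^ n * (v + 1/u) := by linarith
      _ ≤ (z + v + 1/u) * 2 ^ (n+1) := by ring_nf; nlinarith [hz, h2]
end
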